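/- The function σ(ρ₁,ρ₂) = (1/π)[Λ(πρ₁)+Λ(πρ₂)+Λ(π(1-ρ₁-ρ₂))] with Λ(θ)=∫₀^θ ln(2 sin t)dt is strictly negative on the interior of the triangle T and vanishes on the boundary ∂T. -/

import Mathlib

open Real

/-- The Lobachevsky-type function `Λ(θ) = ∫₀^θ ln(2 sin t) dt`. -/
noncomputable def Lob (θ : ℝ) : ℝ := ∫ t in (0 : ℝ)..θ, Real.log (2 * Real.sin t)

/-- The lozenge surface tension. -/
noncomputable def surfTen (ρ₁ ρ₂ : ℝ) : ℝ :=
  (1 / π) * (Lob (π * ρ₁) + Lob (π * ρ₂) + Lob (π * (1 - ρ₁ - ρ₂)))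

/-!
With `θᵢ = πρᵢ` we have `θ₁ + θ₂ + θ₃ = π`. Since `Λ(π) = 0` and `ln(2 sin t)` is symmetric about
`π/2`, `Λ(π - θ) = -Λ(θ)`; this gives the vanishing on the boundary, where one `θᵢ` is `0`.
In the interior, if `θ₁ ≤ θ₃` then `sin t < sin (t + θ₂)` for `0 < t < θ₁`, so
`Λ(θ₁) + Λ(θ₂) < Λ(θ₁ + θ₂) = Λ(π - θ₃) = -Λ(θ₃)`.
-/

open MeasureTheory intervalIntegral

theorem Real.sin_lt_sin_of_lt_of_add_lt_pi {x y : ℝ} (hx : 0 ≤ x) (hxy : x < y)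
    (hxy' : x + y < π) : sin x < sin y := by
  rw [← sub_pos, sin_sub_sin]
  have hsin : 0 < sin ((y - x) / 2) := sin_pos_of_pos_of_lt_pi (by linarith) (by linarith)
  have hcos : 0 < cos ((y + x) / 2) := cos_pos_of_mem_Ioo ⟨by linarith, by linarith⟩
  positivity

theorem intervalIntegrable_log_two_mul_sin (a b : ℝ) :
    IntervalIntegrable (fun t => log (2 * sin t)) volume a b :=
  (analyticOnNhd_const.mul analyticOnNhd_sin).meromorphicOn.intervalIntegrable_log

theorem Lob_zero : Lob 0 = 0 := integral_same

theorem Lob_pi : Lob π = 0 := by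
  have hae : ∀ᵐ t ∂volume, t ∈ Set.uIoc 0 π → log (2 * sin t) = log 2 + log (sin t) := by
    filter_upwards [Measure.ae_ne volume π] with t hne ht
    rw [Set.uIoc_of_le pi_pos.le] at ht
    have : 0 < sin t := sin_pos_of_pos_of_lt_pi ht.1 (lt_of_le_of_ne ht.2 hne)
    exact log_mul two_ne_zero this.ne'
  rw [Lob, integral_congr_ae hae,
    integral_add (g := fun t => log (sin t)) intervalIntegrable_const intervalIntegrable_log_sin,
    intervalIntegral.integral_const, integral_log_sin_zero_pi]
  simp only [sub_zero, smul_eq_mul]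
  ring

theorem Lob_pi_sub (θ : ℝ) : Lob (π - θ) = -Lob θ := by
  have hreflect : ∫ t in (π - θ)..π, log (2 * sin t) = Lob θ := by
    simpa only [Lob, sub_zero, sin_pi_sub] using
      (integral_comp_sub_left (fun t => log (2 * sin t)) π (a := 0) (b := θ)).symm
  rw [← hreflect, ← integral_interval_sub_left (intervalIntegrable_log_two_mul_sin _ _)
    (intervalIntegrable_log_two_mul_sin _ _), ← Lob, ← Lob, Lob_pi]
  ring

theorem Lob_add_Lob_lt_Lob_add {a b : ℝ} (ha : 0 < a) (hb : 0 < b) (hab : 2 * a + b ≤ π) :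
    Lob a + Lob b < Lob (a + b) := by
  have hshift : Lob (a + b) - Lob b = ∫ t in (0 : ℝ)..a, log (2 * sin (t + b)) := by
    rw [Lob, Lob, integral_interval_sub_left (intervalIntegrable_log_two_mul_sin _ _)
      (intervalIntegrable_log_two_mul_sin _ _), integral_comp_add_right (fun t => log (2 * sin t)),
      zero_add]
  have hshiftInt : IntervalIntegrable (fun t => log (2 * sin (t + b))) volume 0 a := by
    simpa only [sub_self, add_sub_cancel_right] using
      (intervalIntegrable_log_two_mul_sin b (a + b)).comp_add_right b
  have hpos : 0 < ∫ t in (0 : ℝ)..a, (log (2 * sin (t + b)) - log (2 * sin t)) := by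
    refine intervalIntegral_pos_of_pos_on ?_ (fun t ht => ?_) ha
    · exact hshiftInt.sub (intervalIntegrable_log_two_mul_sin _ _)
    · have hsin : 0 < sin t := sin_pos_of_pos_of_lt_pi ht.1 (by linarith [ht.2])
      have hlt : sin t < sin (t + b) :=
        sin_lt_sin_of_lt_of_add_lt_pi ht.1.le (by linarith) (by linarith [ht.2])
      exact sub_pos.2 (log_lt_log (by positivity) (by linarith))
  rw [integral_sub hshiftInt (intervalIntegrable_log_two_mul_sin _ _), ← hshift] at hpos
  rw [Lob]
  linarith

theorem Lob_add_Lob_add_Lob_neg {a b c : ℝ} (ha : 0 < a) (hb : 0 < b) (hc : 0 < c)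
    (habc : a + b + c = π) : Lob a + Lob b + Lob c < 0 := by
  rcases le_total a c with hac | hca
  · have hsuper := Lob_add_Lob_lt_Lob_add ha hb (by linarith)
    have hreflect := Lob_pi_sub c
    rw [show π - c = a + b by linarith] at hreflect
    linarith
  · have hsuper := Lob_add_Lob_lt_Lob_add hc hb (by linarith)
    have hreflect := Lob_pi_sub a
    rw [show π - a = c + b by linarith] at hreflect
    linarith

theorem Lob_add_Lob_add_Lob_eq_zero {a b c : ℝ} (habc : a + b + c = π)
    (h : a = 0 ∨ b = 0 ∨ c = 0) : Lob a + Lob b + Lob c = 0 := by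
  rcases h with rfl | rfl | rfl
  · rw [show c = π - b by linarith, Lob_pi_sub, Lob_zero]; ring
  · rw [show c = π - a by linarith, Lob_pi_sub, Lob_zero]; ring
  · rw [show b = π - a by linarith, Lob_pi_sub, Lob_zero]; ring

theorem surfTen_neg_interior_zero_boundary :
    (∀ ρ₁ ρ₂ : ℝ, 0 < ρ₁ → 0 < ρ₂ → ρ₁ + ρ₂ < 1 → surfTen ρ₁ ρ₂ < 0) ∧
    (∀ ρ₁ ρ₂ : ℝ, 0 ≤ ρ₁ → 0 ≤ ρ₂ → ρ₁ + ρ₂ ≤ 1 →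
      (ρ₁ = 0 ∨ ρ₂ = 0 ∨ ρ₁ + ρ₂ = 1) → surfTen ρ₁ ρ₂ = 0) := by
  have hsum (ρ₁ ρ₂ : ℝ) : π * ρ₁ + π * ρ₂ + π * (1 - ρ₁ - ρ₂) = π := by ring
  constructor
  · intro ρ₁ ρ₂ h₁ h₂ h₁₂
    have h₃ : 0 < 1 - ρ₁ - ρ₂ := by linarith
    exact mul_neg_of_pos_of_neg (by positivity)
      (Lob_add_Lob_add_Lob_neg (by positivity) (by positivity) (by positivity) (hsum ρ₁ ρ₂))
  · intro ρ₁ ρ₂ _ _ _ hboundary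
    refine mul_eq_zero_of_right _ (Lob_add_Lob_add_Lob_eq_zero (hsum ρ₁ ρ₂) ?_)
    rcases hboundary with h | h | h
    · exact Or.inl (by rw [h, mul_zero])
    · exact Or.inr (Or.inl (by rw [h, mul_zero]))
    · exact Or.inr (Or.inr (by rw [show 1 - ρ₁ - ρ₂ = 0 by linarith, mul_zero]))
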